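/- Fix a second-level sequent Ψ ⇛ Φ that is not cut-free provable in GLS_seq, let Ψ⁺ ⇛ Φ⁺ be a saturated extension of it (Ψ ⊆ Ψ⁺, Φ ⊆ Φ⁺, formulas in SF(Ψ,Φ)) that is not cut-free provable, let ⟨W₀, R₀, V₀⟩ be the canonical GL-model of saturated non-cut-free-provable first-level sequents, and define W = W₀ ∪ ℕ with x R y iff (x, y ∈ W₀ and x R₀ y) or (x ∈ ℕ and y = (Ψ⁺⇒Φ⁺)) or (x ∈ ℕ and (Ψ⁺⇒Φ⁺) R₀ y) or (x, y ∈ ℕ and x > y), and V agreeing with V₀ on W₀ and V(n, p) = V₀((Ψ⁺⇒Φ⁺), p) for n ∈ ℕ. Then R is transitive and converse well-founded; for every world (Γ⇒Δ) ∈ W₀ and every formula φ, V((Γ⇒Δ), φ) = V₀((Γ⇒Δ), φ); and for every n ∈ ℕ and every formula φ: if φ ∈ Ψ⁺ then V(n, φ) = true, and if φ ∈ Φ⁺ then V(n, φ) = false. -/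
import Mathlib


/-- Modal formulas: propositional variables, ⊥, →, □. -/
inductive Formula : Type
  | var : ℕ → Formula
  | bot : Formula
  | imp : Formula → Formula → Formula
  | box : Formula → Formula
deriving DecidableEq

/-- Levels of sequents in GLS_seq: first level (⇒) and second level (⇛). -/
inductive SeqLevel : Type
  | one
  | two
deriving DecidableEq

/-- The set of subformulas of a formula. -/
def Formula.subf : Formula → Finset Formula
  | .var p => {.var p}
  | .bot => {.bot}
  | .imp φ ψ => insert (.imp φ ψ) (φ.subf ∪ ψ.subf)
  | .box φ => insert (.box φ) φ.subf

/-- SF(Ψ,Φ): all subformulas of formulas in Ψ ∪ Φ. -/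
def SF (Ψ Φ : Finset Formula) : Finset Formula := (Ψ ∪ Φ).biUnion Formula.subf

def Formula.isBox : Formula → Bool
  | .box _ => true
  | _ => false

def Formula.unbox : Formula → Formula
  | .box φ => φ
  | φ => φ

/-- Θ_□ = {φ : □φ ∈ Θ}. -/
def boxInv (Θ : Finset Formula) : Finset Formula :=
  (Θ.filter fun ψ => ψ.isBox).image Formula.unbox

/-- The sequent calculus GLS_seq, on sequents of two levels.  The Bool parameter
records whether the cut rule may be used: `GLSSeq true` is provability in GLS_seq,
`GLSSeq false` is cut-free provability.  The first-level fragment is exactly GL_seq. -/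
inductive GLSSeq : Bool → SeqLevel → Finset Formula → Finset Formula → Prop
  | init (c lv φ) : GLSSeq c lv {φ} {φ}
  | initBot (c lv) : GLSSeq c lv {Formula.bot} ∅
  | cut {lv Γ Δ} (φ) : GLSSeq true lv Γ (insert φ Δ) → GLSSeq true lv (insert φ Γ) Δ →
      GLSSeq true lv Γ Δ
  | weak {c lv Γ Δ Γ' Δ'} : Γ ⊆ Γ' → Δ ⊆ Δ' → GLSSeq c lv Γ Δ → GLSSeq c lv Γ' Δ'
  | impL {c lv Γ Δ φ ψ} : GLSSeq c lv Γ (insert φ Δ) → GLSSeq c lv (insert ψ Γ) Δ →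
      GLSSeq c lv (insert (.imp φ ψ) Γ) Δ
  | impR {c lv Γ Δ φ ψ} : GLSSeq c lv (insert φ Γ) (insert ψ Δ) →
      GLSSeq c lv Γ (insert (.imp φ ψ) Δ)
  | boxGL {c Γ φ} : GLSSeq c .one (Γ ∪ Γ.image .box ∪ {.box φ}) {φ} →
      GLSSeq c .one (Γ.image .box) {.box φ}
  | boxL {c Γ Δ} (φ) : GLSSeq c .two (insert φ Γ) Δ → GLSSeq c .two (insert (.box φ) Γ) Δ
  | lift {c Γ Δ} : GLSSeq c .one Γ Δ → GLSSeq c .two Γ Δ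

/-- The sequent calculus GL_seq (on first-level sequents only). -/
inductive GLSeq : Bool → Finset Formula → Finset Formula → Prop
  | init (c φ) : GLSeq c {φ} {φ}
  | initBot (c) : GLSeq c {Formula.bot} ∅
  | cut {Γ Δ} (φ) : GLSeq true Γ (insert φ Δ) → GLSeq true (insert φ Γ) Δ → GLSeq true Γ Δ
  | weak {c Γ Δ Γ' Δ'} : Γ ⊆ Γ' → Δ ⊆ Δ' → GLSeq c Γ Δ → GLSeq c Γ' Δ'
  | impL {c Γ Δ φ ψ} : GLSeq c Γ (insert φ Δ) → GLSeq c (insert ψ Γ) Δ →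
      GLSeq c (insert (.imp φ ψ) Γ) Δ
  | impR {c Γ Δ φ ψ} : GLSeq c (insert φ Γ) (insert ψ Δ) → GLSeq c Γ (insert (.imp φ ψ) Δ)
  | boxGL {c Γ φ} : GLSeq c (Γ ∪ Γ.image .box ∪ {.box φ}) {φ} → GLSeq c (Γ.image .box) {.box φ}

/-- Proof trees of GLS_seq (cut included). -/
inductive GLSTree : SeqLevel → Finset Formula → Finset Formula → Type
  | init (lv φ) : GLSTree lv {φ} {φ}
  | initBot (lv) : GLSTree lv {Formula.bot} ∅
  | cut {lv Γ Δ} (φ) : GLSTree lv Γ (insert φ Δ) → GLSTree lv (insert φ Γ) Δ → GLSTree lv Γ Δ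
  | weak {lv Γ Δ} (Γ' Δ' : Finset Formula) : Γ ⊆ Γ' → Δ ⊆ Δ' → GLSTree lv Γ Δ → GLSTree lv Γ' Δ'
  | impL {lv Γ Δ} (φ ψ) : GLSTree lv Γ (insert φ Δ) → GLSTree lv (insert ψ Γ) Δ →
      GLSTree lv (insert (.imp φ ψ) Γ) Δ
  | impR {lv Γ Δ} (φ ψ) : GLSTree lv (insert φ Γ) (insert ψ Δ) → GLSTree lv Γ (insert (.imp φ ψ) Δ)
  | boxGL (Γ φ) : GLSTree .one (Γ ∪ Γ.image .box ∪ {.box φ}) {φ} → GLSTree .one (Γ.image .box) {.box φ}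
  | boxL {Γ Δ} (φ) : GLSTree .two (insert φ Γ) Δ → GLSTree .two (insert (.box φ) Γ) Δ
  | lift {Γ Δ} : GLSTree .one Γ Δ → GLSTree .two Γ Δ

/-- The set of principal formulas of all (□L) rules occurring in a proof tree. -/
def GLSTree.principals : ∀ {lv Γ Δ}, GLSTree lv Γ Δ → Finset Formula
  | _, _, _, .init _ _ => ∅
  | _, _, _, .initBot _ => ∅
  | _, _, _, .cut _ t₁ t₂ => t₁.principals ∪ t₂.principals
  | _, _, _, .weak _ _ _ _ t => t.principals
  | _, _, _, .impL _ _ t₁ t₂ => t₁.principals ∪ t₂.principals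
  | _, _, _, .impR _ _ t => t.principals
  | _, _, _, .boxGL _ _ t => t.principals
  | _, _, _, .boxL φ t => insert (Formula.box φ) t.principals
  | _, _, _, .lift t => t.principals

/-- A proof tree bundled with its level and conclusion. -/
abbrev PGLSTree : Type :=
  (lv : SeqLevel) × (Γ : Finset Formula) × (Δ : Finset Formula) × GLSTree lv Γ Δ

/-- The set of subproofs of a proof tree (including the tree itself). -/
def GLSTree.subproofs {lv Γ Δ} (t : GLSTree lv Γ Δ) : Set PGLSTree :=
  insert ⟨lv, Γ, Δ, t⟩ <|
    match lv, Γ, Δ, t with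
    | _, _, _, .init _ _ => ∅
    | _, _, _, .initBot _ => ∅
    | _, _, _, .cut _ t₁ t₂ => t₁.subproofs ∪ t₂.subproofs
    | _, _, _, .weak _ _ _ _ t₁ => t₁.subproofs
    | _, _, _, .impL _ _ t₁ t₂ => t₁.subproofs ∪ t₂.subproofs
    | _, _, _, .impR _ _ t₁ => t₁.subproofs
    | _, _, _, .boxGL _ _ t₁ => t₁.subproofs
    | _, _, _, .boxL _ t₁ => t₁.subproofs
    | _, _, _, .lift t₁ => t₁.subproofs

/-- Kripke satisfaction over a frame `R` with atomic valuation `v`. -/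
def KSat {W : Type} (R : W → W → Prop) (v : W → ℕ → Prop) : Formula → W → Prop
  | .var p, w => v w p
  | .bot, _ => False
  | .imp φ ψ, w => KSat R v φ w → KSat R v ψ w
  | .box φ, w => ∀ w', R w w' → KSat R v φ w'

/-- A GL-model: a nonempty, transitive, converse well-founded Kripke model. -/
structure GLModel where
  World : Type
  ne : Nonempty World
  R : World → World → Prop
  trans : Transitive R
  cwf : ∀ f : ℕ → World, ¬ ∀ i, R (f i) (f (i + 1))
  val : World → ℕ → Prop

/-- Truth of a formula at a world of a GL-model. -/
def GLModel.sat (M : GLModel) (w : M.World) (φ : Formula) : Prop := KSat M.R M.val φ w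

/-- Truth of a sequent Γ ▸ Δ at a world: some γ ∈ Γ is false or some δ ∈ Δ is true. -/
def GLModel.seqTrue (M : GLModel) (w : M.World) (Γ Δ : Finset Formula) : Prop :=
  (∃ γ ∈ Γ, ¬ M.sat w γ) ∨ (∃ δ ∈ Δ, M.sat w δ)

/-- w is Σ-reflexive: □α → α is true at w for every □α ∈ Σ. -/
def GLModel.reflexiveFor (M : GLModel) (w : M.World) (S : Finset Formula) : Prop :=
  ∀ α : Formula, Formula.box α ∈ S → M.sat w ((Formula.box α).imp α)

/-- Saturation conditions (→L), (→R) for first-level sequents. -/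
def Saturated1 (Γ Δ : Finset Formula) : Prop :=
  (∀ φ ψ : Formula, φ.imp ψ ∈ Γ → φ ∈ Δ ∨ ψ ∈ Γ) ∧
  (∀ φ ψ : Formula, φ.imp ψ ∈ Δ → φ ∈ Γ ∧ ψ ∈ Δ)

/-- Saturation for second-level sequents: additionally (□L). -/
def Saturated2 (Γ Δ : Finset Formula) : Prop :=
  Saturated1 Γ Δ ∧ ∀ φ : Formula, Formula.box φ ∈ Γ → φ ∈ Γ

def Saturated : SeqLevel → Finset Formula → Finset Formula → Prop
  | .one => Saturated1
  | .two => Saturated2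

/-- The Hilbert system GL. -/
inductive GLHilbert : Formula → Prop
  | ax1 (φ ψ : Formula) : GLHilbert (φ.imp (ψ.imp φ))
  | ax2 (φ ψ χ : Formula) :
      GLHilbert ((φ.imp (ψ.imp χ)).imp ((φ.imp ψ).imp (φ.imp χ)))
  | ax3 (φ : Formula) : GLHilbert (((φ.imp .bot).imp .bot).imp φ)
  | axK (φ ψ : Formula) :
      GLHilbert ((Formula.box (φ.imp ψ)).imp ((Formula.box φ).imp (Formula.box ψ)))
  | axLob (φ : Formula) :
      GLHilbert ((Formula.box ((Formula.box φ).imp φ)).imp (Formula.box φ))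
  | mp {φ ψ} : GLHilbert (φ.imp ψ) → GLHilbert φ → GLHilbert ψ
  | nec {φ} : GLHilbert φ → GLHilbert (Formula.box φ)

/-- The Hilbert system GLS: theorems of GL and all □α → α, closed under modus ponens. -/
inductive GLSHilbert : Formula → Prop
  | gl {φ} : GLHilbert φ → GLSHilbert φ
  | refl (α : Formula) : GLSHilbert ((Formula.box α).imp α)
  | mp {φ ψ} : GLSHilbert (φ.imp ψ) → GLSHilbert φ → GLSHilbert ψ

/-- Conjunction (encoded with → and ⊥) of a list of formulas; empty conjunction is ⊤. -/
def Formula.conj : List Formula → Formula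
  | [] => Formula.bot.imp Formula.bot
  | φ :: l => ((φ.imp ((Formula.conj l).imp .bot)).imp .bot)

/-- Membership predicate for the canonical model: saturated first-level sequents over S
that are not cut-free provable in GLS_seq. -/
def W0pred (S : Finset Formula) (s : Finset Formula × Finset Formula) : Prop :=
  Saturated1 s.1 s.2 ∧ ¬ GLSSeq false SeqLevel.one s.1 s.2 ∧ s.1 ∪ s.2 ⊆ S

/-- Worlds of the canonical model. -/
def W0 (S : Finset Formula) : Type := {s : Finset Formula × Finset Formula // W0pred S s}

/-- Accessibility of the canonical model: (Γ⇒Δ) R₀ (Γ'⇒Δ') iff Γ_□ ⊊ Γ'_□ and Γ_□ ⊆ Γ'. -/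
def R0 (S : Finset Formula) (s t : W0 S) : Prop :=
  boxInv s.1.1 ⊂ boxInv t.1.1 ∧ boxInv s.1.1 ⊆ t.1.1

/-- Valuation of the canonical model: p is true at (Γ⇒Δ) iff p ∈ Γ. -/
def V0 (S : Finset Formula) (s : W0 S) (p : ℕ) : Prop := Formula.var p ∈ s.1.1

/-- The extended set of worlds W = W₀ ∪ ℕ. -/
def Wext (S : Finset Formula) : Type := W0 S ⊕ ℕ

/-- The extended accessibility relation, with distinguished world `wp` in W₀. -/
def Rext (S : Finset Formula) (wp : W0 S) : Wext S → Wext S → Prop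
  | Sum.inl x, Sum.inl y => R0 S x y
  | Sum.inr _, Sum.inl y => y = wp ∨ R0 S wp y
  | Sum.inr n, Sum.inr m => m < n
  | Sum.inl _, Sum.inr _ => False

/-- The extended valuation: worlds in ℕ behave like the distinguished world `wp`. -/
def Vext (S : Finset Formula) (wp : W0 S) : Wext S → ℕ → Prop
  | Sum.inl x, p => V0 S x p
  | Sum.inr _, p => V0 S wp p
section Aux

lemma mem_subf_self (φ : Formula) : φ ∈ φ.subf := by
  cases φ <;> simp [Formula.subf]

lemma subf_trans : ∀ φ ψ : Formula, ψ ∈ φ.subf → ψ.subf ⊆ φ.subf := by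
  intro φ
  induction φ with
  | var p => intro ψ h; simp [Formula.subf] at h; subst h; simp [Formula.subf]
  | bot => intro ψ h; simp [Formula.subf] at h; subst h; simp [Formula.subf]
  | imp α β ihα ihβ =>
      intro ψ h
      simp only [Formula.subf, Finset.mem_insert, Finset.mem_union] at h
      rcases h with h | h | h
      · subst h; exact subset_rfl
      · exact (ihα ψ h).trans (by intro x hx; simp [Formula.subf]; right; left; exact hx)
      · exact (ihβ ψ h).trans (by intro x hx; simp [Formula.subf]; right; right; exact hx)
  | box α ih =>
      intro ψ h
      simp only [Formula.subf, Finset.mem_insert] at h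
      rcases h with h | h
      · subst h; exact subset_rfl
      · exact (ih ψ h).trans (by intro x hx; simp [Formula.subf]; right; exact hx)

lemma SF_closed (Ψ Φ : Finset Formula) : ∀ φ ∈ SF Ψ Φ, φ.subf ⊆ SF Ψ Φ := by
  intro φ hφ
  simp only [SF, Finset.mem_biUnion] at hφ ⊢
  obtain ⟨χ, hχ, hsub⟩ := hφ
  intro x hx
  exact Finset.mem_biUnion.mpr ⟨χ, hχ, subf_trans χ φ hsub hx⟩

lemma mem_boxInv {Θ : Finset Formula} {ψ : Formula} :
    ψ ∈ boxInv Θ ↔ Formula.box ψ ∈ Θ := by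
  simp only [boxInv, Finset.mem_image, Finset.mem_filter]
  constructor
  · rintro ⟨χ, ⟨hχ, hb⟩, he⟩
    cases χ <;> simp [Formula.isBox] at hb
    simp [Formula.unbox] at he; subst he; exact hχ
  · intro h; exact ⟨.box ψ, ⟨h, rfl⟩, rfl⟩

lemma boxInv_mono {Θ Θ' : Finset Formula} (h : Θ ⊆ Θ') : boxInv Θ ⊆ boxInv Θ' := by
  intro ψ hψ; exact mem_boxInv.mpr (h (mem_boxInv.mp hψ))

lemma prov_of_mem {c : Bool} {lv : SeqLevel} {Γ Δ : Finset Formula} {φ : Formula}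
    (h1 : φ ∈ Γ) (h2 : φ ∈ Δ) : GLSSeq c lv Γ Δ :=
  GLSSeq.weak (Finset.singleton_subset_iff.mpr h1) (Finset.singleton_subset_iff.mpr h2)
    (GLSSeq.init c lv φ)

lemma prov_of_bot {c : Bool} {lv : SeqLevel} {Γ Δ : Finset Formula}
    (h : Formula.bot ∈ Γ) : GLSSeq c lv Γ Δ :=
  GLSSeq.weak (Finset.singleton_subset_iff.mpr h) (Finset.empty_subset _)
    (GLSSeq.initBot c lv)

lemma sdiff_insert_card_lt {S T : Finset Formula} {x : Formula} (hx : x ∈ S) (hx2 : x ∉ T) :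
    (S \ insert x T).card < (S \ T).card := by
  apply Finset.card_lt_card
  rw [Finset.ssubset_iff_of_subset (Finset.sdiff_subset_sdiff subset_rfl (Finset.subset_insert _ _))]
  exact ⟨x, Finset.mem_sdiff.mpr ⟨hx, hx2⟩, by simp⟩

lemma sdiff_insert_card_le (S T : Finset Formula) (x : Formula) :
    (S \ insert x T).card ≤ (S \ T).card :=
  Finset.card_le_card (Finset.sdiff_subset_sdiff subset_rfl (Finset.subset_insert _ _))

lemma saturate_aux {S : Finset Formula} (hS : ∀ φ ∈ S, φ.subf ⊆ S) :
    ∀ n (Γ Δ : Finset Formula), (S \ Γ).card + (S \ Δ).card ≤ n → Γ ∪ Δ ⊆ S →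
      ¬ GLSSeq false .one Γ Δ →
      ∃ Γ' Δ', Γ ⊆ Γ' ∧ Δ ⊆ Δ' ∧ Γ' ∪ Δ' ⊆ S ∧ Saturated1 Γ' Δ' ∧
        ¬ GLSSeq false .one Γ' Δ' := by
  intro n
  induction n with
  | zero =>
      intro Γ Δ hm hsub hnp
      refine ⟨Γ, Δ, subset_rfl, subset_rfl, hsub, ?_, hnp⟩
      have hΓ : S ⊆ Γ := by
        have : (S \ Γ).card = 0 := by omega
        intro x hx
        by_contra hc
        exact absurd this (Finset.card_ne_zero_of_mem (Finset.mem_sdiff.mpr ⟨hx, hc⟩))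
      have hΔ : S ⊆ Δ := by
        have : (S \ Δ).card = 0 := by omega
        intro x hx
        by_contra hc
        exact absurd this (Finset.card_ne_zero_of_mem (Finset.mem_sdiff.mpr ⟨hx, hc⟩))
      constructor
      · intro φ ψ hφψ
        left
        exact hΔ (hS _ (hsub (Finset.mem_union_left _ hφψ)) (by simp [Formula.subf, mem_subf_self]))
      · intro φ ψ hφψ
        have hin : (Formula.imp φ ψ).subf ⊆ S := hS _ (hsub (Finset.mem_union_right _ hφψ))
        exact ⟨hΓ (hin (by simp [Formula.subf, mem_subf_self])),
               hΔ (hin (by simp [Formula.subf, mem_subf_self]))⟩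
  | succ n ih =>
      intro Γ Δ hm hsub hnp
      by_cases hsat : Saturated1 Γ Δ
      · exact ⟨Γ, Δ, subset_rfl, subset_rfl, hsub, hsat, hnp⟩
      · rw [Saturated1, not_and_or] at hsat
        rcases hsat with hA | hB
        · push_neg at hA
          obtain ⟨φ, ψ, hmem, hφ, hψ⟩ := hA
          have hφS : φ ∈ S :=
            hS _ (hsub (Finset.mem_union_left _ hmem)) (by simp [Formula.subf, mem_subf_self])
          have hψS : ψ ∈ S :=
            hS _ (hsub (Finset.mem_union_left _ hmem)) (by simp [Formula.subf, mem_subf_self])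
          by_cases hp : GLSSeq false .one Γ (insert φ Δ)
          · -- then insert ψ Γ ⇒ Δ is not provable
            have hnp2 : ¬ GLSSeq false .one (insert ψ Γ) Δ := by
              intro hp2
              have := GLSSeq.impL hp hp2
              rw [Finset.insert_eq_self.mpr hmem] at this
              exact hnp this
            have hmeas : (S \ insert ψ Γ).card + (S \ Δ).card ≤ n := by
              have := sdiff_insert_card_lt hψS hψ
              omega
            obtain ⟨Γ', Δ', h1, h2, h3, h4, h5⟩ := ih (insert ψ Γ) Δ hmeas
              (by
                intro x hx
                rcases Finset.mem_union.mp hx with hx | hx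
                · rcases Finset.mem_insert.mp hx with rfl | hx
                  · exact hψS
                  · exact hsub (Finset.mem_union_left _ hx)
                · exact hsub (Finset.mem_union_right _ hx)) hnp2
            exact ⟨Γ', Δ', (Finset.subset_insert _ _).trans h1, h2, h3, h4, h5⟩
          · have hmeas : (S \ Γ).card + (S \ insert φ Δ).card ≤ n := by
              have := sdiff_insert_card_lt hφS hφ
              omega
            obtain ⟨Γ', Δ', h1, h2, h3, h4, h5⟩ := ih Γ (insert φ Δ) hmeas
              (by
                intro x hx
                rcases Finset.mem_union.mp hx with hx | hx
                · exact hsub (Finset.mem_union_left _ hx)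
                · rcases Finset.mem_insert.mp hx with rfl | hx
                  · exact hφS
                  · exact hsub (Finset.mem_union_right _ hx)) hp
            exact ⟨Γ', Δ', h1, (Finset.subset_insert _ _).trans h2, h3, h4, h5⟩
        · push_neg at hB
          obtain ⟨φ, ψ, hmem, hcond⟩ := hB
          have hφS : φ ∈ S :=
            hS _ (hsub (Finset.mem_union_right _ hmem)) (by simp [Formula.subf, mem_subf_self])
          have hψS : ψ ∈ S :=
            hS _ (hsub (Finset.mem_union_right _ hmem)) (by simp [Formula.subf, mem_subf_self])
          have hnp2 : ¬ GLSSeq false .one (insert φ Γ) (insert ψ Δ) := by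
            intro hp2
            have := GLSSeq.impR hp2
            rw [Finset.insert_eq_self.mpr hmem] at this
            exact hnp this
          have hmeas : (S \ insert φ Γ).card + (S \ insert ψ Δ).card ≤ n := by
            by_cases hφΓ : φ ∈ Γ
            · have hψΔ : ψ ∉ Δ := fun h => hcond hφΓ h
              have h1 := sdiff_insert_card_lt hψS hψΔ
              have h2 := sdiff_insert_card_le S Γ φ
              omega
            · have h1 := sdiff_insert_card_lt hφS hφΓ
              have h2 := sdiff_insert_card_le S Δ ψ
              omega
          obtain ⟨Γ', Δ', h1, h2, h3, h4, h5⟩ := ih (insert φ Γ) (insert ψ Δ) hmeas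
            (by
              intro x hx
              rcases Finset.mem_union.mp hx with hx | hx
              · rcases Finset.mem_insert.mp hx with rfl | hx
                · exact hφS
                · exact hsub (Finset.mem_union_left _ hx)
              · rcases Finset.mem_insert.mp hx with rfl | hx
                · exact hψS
                · exact hsub (Finset.mem_union_right _ hx)) hnp2
          exact ⟨Γ', Δ', (Finset.subset_insert _ _).trans h1,
            (Finset.subset_insert _ _).trans h2, h3, h4, h5⟩

lemma exists_successor {S : Finset Formula} (hS : ∀ φ ∈ S, φ.subf ⊆ S)
    (s : W0 S) {φ : Formula} (hφ : Formula.box φ ∈ s.1.2) :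
    ∃ t : W0 S, R0 S s t ∧ φ ∈ t.1.2 := by
  obtain ⟨⟨Γ, Δ⟩, hsat, hnp, hsub⟩ := s
  set B := boxInv Γ with hB
  have hBbox : B.image .box ⊆ Γ := by
    intro x hx
    obtain ⟨ψ, hψ, rfl⟩ := Finset.mem_image.mp hx
    exact mem_boxInv.mp hψ
  have hΓS : Γ ⊆ S := fun x hx => hsub (Finset.mem_union_left _ hx)
  have hΔS : Δ ⊆ S := fun x hx => hsub (Finset.mem_union_right _ hx)
  have hboxφS : Formula.box φ ∈ S := hΔS hφ
  have hφS : φ ∈ S := hS _ hboxφS (by simp [Formula.subf, mem_subf_self])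
  have hΓ₀S : (B ∪ B.image .box ∪ {.box φ}) ∪ ({φ} : Finset Formula) ⊆ S := by
    intro x hx
    rcases Finset.mem_union.mp hx with hx | hx
    · rcases Finset.mem_union.mp hx with hx | hx
      · rcases Finset.mem_union.mp hx with hx | hx
        · have hbx : Formula.box x ∈ Γ := mem_boxInv.mp hx
          exact hS _ (hΓS hbx) (by simp [Formula.subf, mem_subf_self])
        · exact hΓS (hBbox hx)
      · simp at hx; subst hx; exact hboxφS
    · simp at hx; subst hx; exact hφS
  have hnp0 : ¬ GLSSeq false .one (B ∪ B.image .box ∪ {.box φ}) {φ} := by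
    intro hp
    have := GLSSeq.boxGL hp
    exact hnp (GLSSeq.weak hBbox (Finset.singleton_subset_iff.mpr hφ) this)
  obtain ⟨Γ', Δ', h1, h2, h3, h4, h5⟩ :=
    saturate_aux hS ((S \ (B ∪ B.image .box ∪ {.box φ})).card + (S \ ({φ} : Finset Formula)).card)
      _ _ le_rfl hΓ₀S hnp0
  refine ⟨⟨(Γ', Δ'), h4, h5, h3⟩, ⟨?_, ?_⟩, h2 (by simp)⟩
  · rw [Finset.ssubset_iff_of_subset]
    · refine ⟨φ, mem_boxInv.mpr (h1 (by simp)), ?_⟩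
      intro hc
      exact hnp (prov_of_mem (mem_boxInv.mp hc) hφ)
    · intro x hx
      exact mem_boxInv.mpr (h1 (Finset.mem_union_left _ (Finset.mem_union_right _
        (Finset.mem_image.mpr ⟨x, hx, rfl⟩))))
  · intro x hx
    exact h1 (Finset.mem_union_left _ (Finset.mem_union_left _ hx))

end Aux

lemma truth_lemma {S : Finset Formula} (hS : ∀ φ ∈ S, φ.subf ⊆ S) :
    ∀ (φ : Formula) (s : W0 S),
      (φ ∈ s.1.1 → KSat (R0 S) (V0 S) φ s) ∧ (φ ∈ s.1.2 → ¬ KSat (R0 S) (V0 S) φ s) := by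
  intro φ
  induction φ with
  | var p =>
      intro s
      refine ⟨fun h => h, fun h hK => ?_⟩
      exact s.2.2.1 (prov_of_mem (φ := .var p) hK h)
  | bot =>
      intro s
      exact ⟨fun h => absurd (prov_of_bot (c := false) (lv := .one) h) s.2.2.1, fun _ hK => hK⟩
  | imp α β ihα ihβ =>
      intro s
      constructor
      · intro h hα
        rcases s.2.1.1 α β h with hd | hg
        · exact absurd hα ((ihα s).2 hd)
        · exact (ihβ s).1 hg
      · intro h hK
        obtain ⟨h1, h2⟩ := s.2.1.2 α β h
        exact (ihβ s).2 h2 (hK ((ihα s).1 h1))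
  | box α ih =>
      intro s
      constructor
      · intro h t hR
        exact (ih t).1 (hR.2 (mem_boxInv.mpr h))
      · intro h hK
        obtain ⟨t, hR, hmem⟩ := exists_successor hS s h
        exact (ih t).2 hmem (hK t hR)

lemma ext_agrees {S : Finset Formula} (wp : W0 S) :
    ∀ (φ : Formula) (s : W0 S),
      KSat (Rext S wp) (Vext S wp) φ (Sum.inl s) ↔ KSat (R0 S) (V0 S) φ s := by
  intro φ
  induction φ with
  | var p => intro s; exact Iff.rfl
  | bot => intro s; exact Iff.rfl
  | imp α β ihα ihβ =>
      intro s
      constructor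
      · intro h hα; exact (ihβ s).mp (h ((ihα s).mpr hα))
      · intro h hα; exact (ihβ s).mpr (h ((ihα s).mp hα))
  | box α ih =>
      intro s
      constructor
      · intro h t hR
        exact (ih t).mp (h (Sum.inl t) hR)
      · intro h w' hR
        cases w' with
        | inl t => exact (ih t).mpr (h t hR)
        | inr m => exact absurd hR (by simp [Rext])

/-- The extended model: given Ψ ⇛ Φ not cut-free provable and a saturated extension
Ψ⁺ ⇛ Φ⁺ (not cut-free provable, over SF(Ψ,Φ), with (Ψ⁺ ⇒ Φ⁺) a world of the canonical
model), the extended relation R on W = W₀ ∪ ℕ is transitive and converse well-founded,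
the extended valuation agrees with the canonical one on W₀, and at every n ∈ ℕ every
formula of Ψ⁺ is true and every formula of Φ⁺ is false. -/
theorem extended_model_properties (Ψ Φ Ψp Φp : Finset Formula)
    (h0 : ¬ GLSSeq false SeqLevel.two Ψ Φ)
    (hΨ : Ψ ⊆ Ψp) (hΦ : Φ ⊆ Φp)
    (hsat : Saturated2 Ψp Φp)
    (hncf : ¬ GLSSeq false SeqLevel.two Ψp Φp)
    (hmem : W0pred (SF Ψ Φ) (Ψp, Φp)) :
    Transitive (Rext (SF Ψ Φ) ⟨(Ψp, Φp), hmem⟩) ∧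
    (∀ f : ℕ → Wext (SF Ψ Φ),
      ¬ ∀ i, Rext (SF Ψ Φ) ⟨(Ψp, Φp), hmem⟩ (f i) (f (i + 1))) ∧
    (∀ (s : W0 (SF Ψ Φ)) (φ : Formula),
      KSat (Rext (SF Ψ Φ) ⟨(Ψp, Φp), hmem⟩) (Vext (SF Ψ Φ) ⟨(Ψp, Φp), hmem⟩) φ (Sum.inl s) ↔
        KSat (R0 (SF Ψ Φ)) (V0 (SF Ψ Φ)) φ s) ∧
    ∀ (n : ℕ) (φ : Formula),
      (φ ∈ Ψp →
        KSat (Rext (SF Ψ Φ) ⟨(Ψp, Φp), hmem⟩) (Vext (SF Ψ Φ) ⟨(Ψp, Φp), hmem⟩) φ (Sum.inr n)) ∧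
      (φ ∈ Φp →
        ¬ KSat (Rext (SF Ψ Φ) ⟨(Ψp, Φp), hmem⟩) (Vext (SF Ψ Φ) ⟨(Ψp, Φp), hmem⟩) φ (Sum.inr n)) := by
    classical
  set S := SF Ψ Φ with hSdef
  have hS : ∀ φ ∈ S, φ.subf ⊆ S := SF_closed Ψ Φ
  set wp : W0 S := ⟨(Ψp, Φp), hmem⟩ with hwp
  have hnp1 : ¬ GLSSeq false .one Ψp Φp := hmem.2.1
  -- transitivity
  have htrans : Transitive (Rext S wp) := by
    intro a b c hab hbc
    have R0trans : ∀ x y z : W0 S, R0 S x y → R0 S y z → R0 S x z := by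
      intro x y z hxy hyz
      exact ⟨hxy.1.trans hyz.1, (subset_of_ssubset hxy.1).trans hyz.2⟩
    match a, b, c with
    | Sum.inl x, Sum.inl y, Sum.inl z => exact R0trans x y z hab hbc
    | Sum.inl x, Sum.inl y, Sum.inr m => exact hbc.elim
    | Sum.inl x, Sum.inr n, _ => exact hab.elim
    | Sum.inr n, Sum.inl y, Sum.inl z =>
        rcases hab with rfl | hab
        · exact Or.inr hbc
        · exact Or.inr (R0trans _ _ _ hab hbc)
    | Sum.inr n, Sum.inl y, Sum.inr m => exact hbc.elim
    | Sum.inr n, Sum.inr m, Sum.inl z => exact hbc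
    | Sum.inr n, Sum.inr m, Sum.inr k => exact lt_trans hbc hab
  -- converse well-foundedness via a measure
  have hcwf : ∀ f : ℕ → Wext S, ¬ ∀ i, Rext S wp (f i) (f (i + 1)) := by
    intro f hf
    set μ : Wext S → ℕ := fun w =>
      match w with
      | Sum.inl x => (boxInv S).card - (boxInv x.1.1).card
      | Sum.inr n => (boxInv S).card + 1 + n with hμ
    have hbound : ∀ x : W0 S, (boxInv x.1.1).card ≤ (boxInv S).card := by
      intro x
      exact Finset.card_le_card (boxInv_mono (fun a ha => x.2.2.2 (Finset.mem_union_left _ ha)))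
    have hdec : ∀ a b : Wext S, Rext S wp a b → μ b < μ a := by
      intro a b hab
      match a, b with
      | Sum.inl x, Sum.inl y =>
          have h1 := Finset.card_lt_card hab.1
          have h2 := hbound x
          have h3 := hbound y
          simp only [hμ]
          omega
      | Sum.inl x, Sum.inr m => exact hab.elim
      | Sum.inr n, Sum.inl y =>
          have := hbound y
          simp only [hμ]
          omega
      | Sum.inr n, Sum.inr m =>
          have hnm : m < n := hab
          simp only [hμ]
          omega
    have hstep : ∀ i, μ (f (i + 1)) < μ (f i) := fun i => hdec _ _ (hf i)
    have hkey : ∀ i, μ (f i) + i ≤ μ (f 0) := by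
      intro i
      induction i with
      | zero => omega
      | succ i ih => have := hstep i; omega
    have := hkey (μ (f 0) + 1)
    omega
  refine ⟨htrans, hcwf, fun s φ => ext_agrees wp φ s, ?_⟩
  -- main truth at the new worlds
  have hmain : ∀ φ : Formula,
      (φ ∈ Ψp → ∀ n, KSat (Rext S wp) (Vext S wp) φ (Sum.inr n)) ∧
      (φ ∈ Φp → ∀ n, ¬ KSat (Rext S wp) (Vext S wp) φ (Sum.inr n)) := by
    intro φ
    induction φ with
    | var p =>
        refine ⟨fun h n => h, fun h n hK => ?_⟩
        exact hnp1 (prov_of_mem (φ := .var p) hK h)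
    | bot =>
        exact ⟨fun h _ => absurd (prov_of_bot (c := false) (lv := .one) h) hnp1,
          fun _ _ hK => hK⟩
    | imp α β ihα ihβ =>
        constructor
        · intro h n hα
          rcases hsat.1.1 α β h with hd | hg
          · exact absurd hα (ihα.2 hd n)
          · exact ihβ.1 hg n
        · intro h n hK
          obtain ⟨h1, h2⟩ := hsat.1.2 α β h
          exact ihβ.2 h2 n (hK (ihα.1 h1 n))
    | box α ih =>
        constructor
        · intro h n w' hR
          cases w' with
          | inl y =>
              rcases hR with rfl | hR
              · exact (ext_agrees wp α wp).mpr ((truth_lemma hS α wp).1 (hsat.2 α h))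
              · exact (ext_agrees wp α y).mpr ((truth_lemma hS α y).1 (hR.2 (mem_boxInv.mpr h)))
          | inr m => exact ih.1 (hsat.2 α h) m
        · intro h n hK
          obtain ⟨t, hR, hmem'⟩ := exists_successor hS wp h
          exact (truth_lemma hS α t).2 hmem'
            ((ext_agrees wp α t).mp (hK (Sum.inl t) (Or.inr hR)))
  exact fun n φ => ⟨fun h => (hmain φ).1 h n, fun h => (hmain φ).2 h n⟩
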